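/- Let d ≥ 1 and let A ⊆ ℝ^d. Suppose that for each k ∈ ℕ there is a closed set E_k ⊆ [0,1]^d with μ(E_k) > 1 − 4^{−k} such that TA + x ⊄ E_k for every T ∈ S_{4^{−k}}^{4^{k}} and every x ∈ ℝ^d. Then E := ∩_{k=1}^∞ E_k is a closed subset of [0,1]^d with μ(E) ≥ 2/3, and E contains no affine copy of A, i.e., TA + x ⊄ E for every invertible linear map T : ℝ^d → ℝ^d and every x ∈ ℝ^d. -/

import Mathlib

open MeasureTheory Filter Set
open scoped ENNReal

/-- The closed unit cube `[0,1]^d` in `ℝ^d`. -/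
def unitCube (d : ℕ) : Set (EuclideanSpace ℝ (Fin d)) :=
  {y | ∀ i, y i ∈ Set.Icc (0 : ℝ) 1}

/-- `‖T‖* = max_{‖u‖ = 1} ‖T u‖`. -/
noncomputable def opMax {d : ℕ}
    (T : EuclideanSpace ℝ (Fin d) →ₗ[ℝ] EuclideanSpace ℝ (Fin d)) : ℝ :=
  sSup {s : ℝ | ∃ u : EuclideanSpace ℝ (Fin d), ‖u‖ = 1 ∧ ‖T u‖ = s}

/-- `‖T‖_* = min_{‖u‖ = 1} ‖T u‖`. -/
noncomputable def opMin {d : ℕ}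
    (T : EuclideanSpace ℝ (Fin d) →ₗ[ℝ] EuclideanSpace ℝ (Fin d)) : ℝ :=
  sInf {s : ℝ | ∃ u : EuclideanSpace ℝ (Fin d), ‖u‖ = 1 ∧ ‖T u‖ = s}

/-- Membership in `S_α^β`: an invertible linear map `T` with `α < ‖T‖_*` and `‖T‖* < β`. -/
def memS {d : ℕ} (α β : ℝ)
    (T : EuclideanSpace ℝ (Fin d) ≃ₗ[ℝ] EuclideanSpace ℝ (Fin d)) : Prop :=
  α < opMin (T : EuclideanSpace ℝ (Fin d) →ₗ[ℝ] EuclideanSpace ℝ (Fin d)) ∧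
    opMax (T : EuclideanSpace ℝ (Fin d) →ₗ[ℝ] EuclideanSpace ℝ (Fin d)) < β

lemma unitCube_volume (d : ℕ) : volume (unitCube d) = 1 := by
  have h : unitCube d = (MeasurableEquiv.toLp 2 (Fin d → ℝ)).symm ⁻¹'
      (Set.univ.pi fun _ => Set.Icc (0:ℝ) 1) := by
    ext x
    simp only [unitCube, mem_setOf_eq, mem_preimage, Set.mem_univ_pi]
    rfl
  rw [h, (EuclideanSpace.volume_preserving_symm_measurableEquiv_toLp (Fin d)).measure_preimage
    (MeasurableSet.univ_pi (fun _ => measurableSet_Icc)).nullMeasurableSet]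
  rw [volume_pi_pi]
  simp [Real.volume_Icc]

lemma tsum_geom_third : ∑' n : ℕ, (4:ℝ≥0∞)⁻¹ ^ (n+1) = 3⁻¹ := by
  have h : ∀ n : ℕ, (4:ℝ≥0∞)⁻¹ ^ (n+1) = (4:ℝ≥0∞)⁻¹ ^ n * 4⁻¹ := fun n => pow_succ _ _
  rw [tsum_congr h, ENNReal.tsum_mul_right, ENNReal.tsum_geometric]
  have h34 : (1 - (4:ℝ≥0∞)⁻¹) = 3/4 := by
    apply ENNReal.sub_eq_of_eq_add (by norm_num)
    rw [← one_div, ENNReal.div_add_div_same, show (3+1 : ℝ≥0∞) = 4 by norm_num,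
      ENNReal.div_self (by norm_num) (by norm_num)]
  rw [h34, ENNReal.inv_div (by norm_num) (by norm_num), mul_comm, ← mul_div_assoc,
    ENNReal.inv_mul_cancel (by norm_num) (by norm_num), one_div]

lemma two_thirds_eq : (2/3 : ℝ≥0∞) = 1 - 3⁻¹ := by
  rw [eq_comm]
  apply ENNReal.sub_eq_of_eq_add (by norm_num)
  rw [← one_div, ENNReal.div_add_div_same, show (2+1 : ℝ≥0∞) = 3 by norm_num,
    ENNReal.div_self (by norm_num) (by norm_num)]

lemma exists_memS (d : ℕ) (hd : 1 ≤ d)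
    (T : EuclideanSpace ℝ (Fin d) ≃ₗ[ℝ] EuclideanSpace ℝ (Fin d)) :
    ∃ k : ℕ, 1 ≤ k ∧ memS ((4 : ℝ)⁻¹ ^ k) ((4 : ℝ) ^ k) T := by
  set u₀ : EuclideanSpace ℝ (Fin d) := EuclideanSpace.single ⟨0, hd⟩ (1:ℝ) with hu₀
  have hnu₀ : ‖u₀‖ = 1 := by simp [hu₀]
  set M : EuclideanSpace ℝ (Fin d) →L[ℝ] EuclideanSpace ℝ (Fin d) :=
    LinearMap.toContinuousLinearMap
      (T : EuclideanSpace ℝ (Fin d) →ₗ[ℝ] EuclideanSpace ℝ (Fin d)) with hM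
  set S : EuclideanSpace ℝ (Fin d) →L[ℝ] EuclideanSpace ℝ (Fin d) :=
    LinearMap.toContinuousLinearMap
      (T.symm : EuclideanSpace ℝ (Fin d) →ₗ[ℝ] EuclideanSpace ℝ (Fin d)) with hS
  have hSpos : 0 < ‖S‖ := by
    rw [norm_pos_iff]
    intro h
    have h1 : T.symm u₀ = 0 := by
      have := congrArg (fun f => f u₀) h
      simpa [hS] using this
    have h2 : u₀ = 0 := by
      have := congrArg T h1
      simpa using this
    rw [h2] at hnu₀; simp at hnu₀
  have hne : {s : ℝ | ∃ u : EuclideanSpace ℝ (Fin d), ‖u‖ = 1 ∧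
      ‖(T : EuclideanSpace ℝ (Fin d) →ₗ[ℝ] EuclideanSpace ℝ (Fin d)) u‖ = s}.Nonempty :=
    ⟨‖T u₀‖, u₀, hnu₀, rfl⟩
  have hmax : opMax (T : EuclideanSpace ℝ (Fin d) →ₗ[ℝ] EuclideanSpace ℝ (Fin d)) ≤ ‖M‖ := by
    apply csSup_le hne
    rintro s ⟨u, hu, rfl⟩
    calc ‖(T : EuclideanSpace ℝ (Fin d) →ₗ[ℝ] EuclideanSpace ℝ (Fin d)) u‖
        = ‖M u‖ := rfl
    _ ≤ ‖M‖ * ‖u‖ := M.le_opNorm u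
    _ = ‖M‖ := by rw [hu, mul_one]
  have hmin : ‖S‖⁻¹ ≤ opMin (T : EuclideanSpace ℝ (Fin d) →ₗ[ℝ] EuclideanSpace ℝ (Fin d)) := by
    apply le_csInf hne
    rintro s ⟨u, hu, rfl⟩
    rw [inv_le_iff_one_le_mul₀ hSpos]
    calc (1:ℝ) = ‖u‖ := hu.symm
    _ = ‖S ((T : EuclideanSpace ℝ (Fin d) →ₗ[ℝ] EuclideanSpace ℝ (Fin d)) u)‖ := by simp [hS]
    _ ≤ ‖S‖ * ‖(T : EuclideanSpace ℝ (Fin d) →ₗ[ℝ] EuclideanSpace ℝ (Fin d)) u‖ := S.le_opNorm _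
    _ = _ := mul_comm _ _
  obtain ⟨k, hk⟩ := pow_unbounded_of_one_lt (max ‖M‖ ‖S‖) (by norm_num : (1:ℝ) < 4)
  refine ⟨max k 1, le_max_right _ _, ?_, ?_⟩
  · have h1 : ‖S‖ < 4 ^ max k 1 :=
      lt_of_lt_of_le (lt_of_le_of_lt (le_max_right _ _) hk)
        (pow_le_pow_right₀ (by norm_num) (le_max_left _ _))
    calc (4:ℝ)⁻¹ ^ max k 1 = ((4:ℝ) ^ max k 1)⁻¹ := by rw [inv_pow]
    _ < ‖S‖⁻¹ := inv_strictAnti₀ hSpos h1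
    _ ≤ _ := hmin
  · have h1 : ‖M‖ < 4 ^ max k 1 :=
      lt_of_lt_of_le (lt_of_le_of_lt (le_max_left _ _) hk)
        (pow_le_pow_right₀ (by norm_num) (le_max_left _ _))
    exact lt_of_le_of_lt hmax h1

/-- Intersecting the sets `E_k` (closed subsets of `[0,1]^d` with `μ(E_k) > 1 − 4^{−k}`
avoiding affine copies `T A + x` with `T ∈ S_{4^{−k}}^{4^{k}}`) yields a closed subset
`E ⊆ [0,1]^d` with `μ(E) ≥ 2/3` containing no affine copy of `A` at all. -/
theorem stmt16 (d : ℕ) (hd : 1 ≤ d) (A : Set (EuclideanSpace ℝ (Fin d)))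
    (E : ℕ → Set (EuclideanSpace ℝ (Fin d)))
    (hclosed : ∀ k, 1 ≤ k → IsClosed (E k))
    (hsub : ∀ k, 1 ≤ k → E k ⊆ unitCube d)
    (hvol : ∀ k : ℕ, 1 ≤ k → 1 - (4 : ℝ≥0∞)⁻¹ ^ k < volume (E k))
    (havoid : ∀ k : ℕ, 1 ≤ k →
      ∀ (T : EuclideanSpace ℝ (Fin d) ≃ₗ[ℝ] EuclideanSpace ℝ (Fin d))
        (v : EuclideanSpace ℝ (Fin d)),
        memS ((4 : ℝ)⁻¹ ^ k) ((4 : ℝ) ^ k) T →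
        ¬ ((fun a => T a + v) '' A ⊆ E k)) :
    IsClosed (⋂ k ∈ {k : ℕ | 1 ≤ k}, E k) ∧
    (⋂ k ∈ {k : ℕ | 1 ≤ k}, E k) ⊆ unitCube d ∧
    (2 / 3 : ℝ≥0∞) ≤ volume (⋂ k ∈ {k : ℕ | 1 ≤ k}, E k) ∧
    ∀ (T : EuclideanSpace ℝ (Fin d) ≃ₗ[ℝ] EuclideanSpace ℝ (Fin d))
      (v : EuclideanSpace ℝ (Fin d)),
      ¬ ((fun a => T a + v) '' A ⊆ ⋂ k ∈ {k : ℕ | 1 ≤ k}, E k) := by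
  set I := ⋂ k ∈ {k : ℕ | 1 ≤ k}, E k with hIdef
  have hsubI : I ⊆ E 1 := biInter_subset_of_mem (show (1:ℕ) ∈ {k : ℕ | 1 ≤ k} by simp)
  have hIclosed : IsClosed I := isClosed_biInter fun k hk => hclosed k hk
  have hIsub : I ⊆ unitCube d := fun x hx => hsub 1 le_rfl (hsubI hx)
  have hcubevol := unitCube_volume d
  -- volume bound
  have hdiffle : ∀ n : ℕ, volume (unitCube d \ E (n+1)) ≤ (4:ℝ≥0∞)⁻¹ ^ (n+1) := by
    intro n
    have hk : 1 ≤ n + 1 := Nat.succ_le_succ (Nat.zero_le n)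
    have hE := (hclosed _ hk).measurableSet
    have hle1 : volume (E (n+1)) ≤ 1 := by
      rw [← hcubevol]; exact measure_mono (hsub _ hk)
    have hfin : volume (E (n+1)) ≠ ∞ := (lt_of_le_of_lt hle1 ENNReal.one_lt_top).ne
    rw [measure_diff (hsub _ hk) hE.nullMeasurableSet hfin, hcubevol]
    rw [tsub_le_iff_right]
    have heps : (4:ℝ≥0∞)⁻¹ ^ (n+1) ≤ 1 := pow_le_one₀ zero_le (by norm_num)
    calc (1:ℝ≥0∞) = (1 - (4:ℝ≥0∞)⁻¹ ^ (n+1)) + (4:ℝ≥0∞)⁻¹ ^ (n+1) :=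
          (tsub_add_cancel_of_le heps).symm
    _ ≤ volume (E (n+1)) + (4:ℝ≥0∞)⁻¹ ^ (n+1) :=
          add_le_add_left (le_of_lt (hvol _ hk)) _
    _ = (4:ℝ≥0∞)⁻¹ ^ (n+1) + volume (E (n+1)) := add_comm _ _
  have hcover : unitCube d \ I ⊆ ⋃ n : ℕ, (unitCube d \ E (n+1)) := by
    rintro x ⟨hxc, hxI⟩
    obtain ⟨k, hk, hxk⟩ : ∃ k, 1 ≤ k ∧ x ∉ E k := by
      by_contra h
      push_neg at h
      exact hxI (mem_iInter₂.mpr fun k hk => h k hk)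
    refine mem_iUnion.mpr ⟨k - 1, hxc, ?_⟩
    rwa [Nat.sub_add_cancel hk]
  have hdiffI : volume (unitCube d \ I) ≤ 3⁻¹ := by
    calc volume (unitCube d \ I) ≤ volume (⋃ n : ℕ, (unitCube d \ E (n+1))) :=
        measure_mono hcover
    _ ≤ ∑' n : ℕ, volume (unitCube d \ E (n+1)) := measure_iUnion_le _
    _ ≤ ∑' n : ℕ, (4:ℝ≥0∞)⁻¹ ^ (n+1) := ENNReal.tsum_le_tsum hdiffle
    _ = 3⁻¹ := tsum_geom_third
  have hvolI : (2/3 : ℝ≥0∞) ≤ volume I := by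
    rw [two_thirds_eq, tsub_le_iff_right]
    calc (1:ℝ≥0∞) = volume (unitCube d) := hcubevol.symm
    _ = volume (I ∪ unitCube d \ I) := by rw [union_diff_cancel hIsub]
    _ ≤ volume I + volume (unitCube d \ I) := measure_union_le _ _
    _ ≤ volume I + 3⁻¹ := add_le_add_right hdiffI _
  refine ⟨hIclosed, hIsub, hvolI, ?_⟩
  intro T v hTV
  obtain ⟨k, hk, hmemS⟩ := exists_memS d hd T
  exact havoid k hk T v hmemS
    (hTV.trans (biInter_subset_of_mem (show k ∈ {k : ℕ | 1 ≤ k} from hk)))
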